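/- Work over K = ℝ. Let f, g : [n] → [m] be injective monotone (strictly increasing) maps. The pullback f*ω_g lies in the degree-n component of Ω_n, which is a free module of rank one over R = MvPolynomial (Fin n) ℝ with basis dx₁ ∧ ⋯ ∧ dxₙ; write f*ω_g = P · dx₁ ∧ ⋯ ∧ dxₙ with P ∈ R. Then the Lebesgue integral of the polynomial function determined by P over Tₙ = {t ∈ ℝⁿ : tᵢ ≥ 0 for all i, t₁ + ⋯ + tₙ ≤ 1} equals 1 if f = g, and equals 0 if f ≠ g. (This is the orthonormality relation ∫_{Δⁿ} f*ω_g = δ_{f,g} showing that Whitney's map π_m is a projector onto the space of elementary forms.) -/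

import Mathlib

noncomputable section

/-- The DG-algebra of polynomial differential forms on the standard
`m`-simplex, modelled as the exterior algebra over
`R = MvPolynomial (Fin m) K` of the free module `R^m`. -/
abbrev Omega (K : Type) [Field K] (m : ℕ) :=
  ExteriorAlgebra (MvPolynomial (Fin m) K) (Fin m → MvPolynomial (Fin m) K)

/-- The coordinates `x₀, x₁, …, x_m`, where `x₁, …, x_m` are the polynomial
variables and `x₀ := 1 - (x₁ + ⋯ + x_m)`. -/
def xC (K : Type) [Field K] (m : ℕ) : Fin (m + 1) → MvPolynomial (Fin m) K :=
  Fin.cases (1 - ∑ i : Fin m, MvPolynomial.X i) (fun i => MvPolynomial.X i)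

/-- The vectors of `R^m` representing `dx₀, dx₁, …, dx_m`: the standard basis
vectors for `dx₁, …, dx_m`, and `-(dx₁ + ⋯ + dx_m)` for `dx₀`. -/
def vDX (K : Type) [Field K] (m : ℕ) :
    Fin (m + 1) → (Fin m → MvPolynomial (Fin m) K) :=
  Fin.cases (-∑ i : Fin m, Pi.single i 1) (fun i => Pi.single i 1)

/-- The one-forms `dx₀, dx₁, …, dx_m` in `Ω_m` (degree `1` elements of the
exterior algebra). -/
def dX (K : Type) [Field K] (m : ℕ) (j : Fin (m + 1)) : Omega K m :=
  ExteriorAlgebra.ι (MvPolynomial (Fin m) K) (vDX K m j)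

/-- The Whitney elementary form
`ω_f = n! Σᵢ (-1)ⁱ x_{f i} dx_{f 0} ∧ ⋯ ∧ (omit dx_{f i}) ∧ ⋯ ∧ dx_{f n}`
associated to a map `f : [n] → [m]`. -/
def omegaF (K : Type) [Field K] {n m : ℕ} (f : Fin (n + 1) → Fin (m + 1)) :
    Omega K m :=
  (n.factorial : MvPolynomial (Fin m) K) •
    ∑ i : Fin (n + 1),
      (-1 : MvPolynomial (Fin m) K) ^ (i : ℕ) •
        (algebraMap (MvPolynomial (Fin m) K) (Omega K m) (xC K m (f i)) *
          ((List.ofFn fun j : Fin (n + 1) => dX K m (f j)).eraseIdx (i : ℕ)).prod)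

/-- On polynomials, the pullback along `g : [n] → [m]` substitutes
`x_j ↦ Σ_{i ∈ [n], g i = j} x_i`. -/
def pullbackPoly (K : Type) [Field K] {n m : ℕ}
    (g : Fin (n + 1) → Fin (m + 1)) :
    MvPolynomial (Fin m) K →ₐ[K] MvPolynomial (Fin n) K :=
  MvPolynomial.aeval fun i : Fin m =>
    ∑ j ∈ Finset.univ.filter (fun j : Fin (n + 1) => g j = i.succ), xC K n j

/-- On one-forms, the pullback along `g : [n] → [m]` sends
`dx_j ↦ Σ_{i ∈ [n], g i = j} dx_i`; this is the corresponding vector. -/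
def pullbackVec (K : Type) [Field K] {n m : ℕ}
    (g : Fin (n + 1) → Fin (m + 1)) (i : Fin m) :
    Fin n → MvPolynomial (Fin n) K :=
  ∑ j ∈ Finset.univ.filter (fun j : Fin (n + 1) => g j = i.succ), vDX K n j

/-- The pullback `g* : Ω_m → Ω_n` along a map `g : [n] → [m]`: the (unique)
`K`-algebra homomorphism determined by `x_j ↦ Σ_{i ∈ [n], g i = j} x_i` and
`dx_j ↦ Σ_{i ∈ [n], g i = j} dx_i` for every `j ∈ [m]`. -/
def pullback (K : Type) [Field K] {n m : ℕ}
    (g : Fin (n + 1) → Fin (m + 1)) : Omega K m → Omega K n :=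
  letI φ : MvPolynomial (Fin m) K →+* Omega K n :=
    (algebraMap (MvPolynomial (Fin n) K) (Omega K n)).comp
      (pullbackPoly K g).toRingHom
  letI hcomm : ∀ (c : MvPolynomial (Fin m) K) (x : Omega K n),
      φ c * x = x * φ c := fun c x => Algebra.commutes (pullbackPoly K g c) x
  letI : Algebra (MvPolynomial (Fin m) K) (Omega K n) := φ.toAlgebra' hcomm
  letI L : (Fin m → MvPolynomial (Fin m) K) →ₗ[MvPolynomial (Fin m) K]
      Omega K n :=
    { toFun := fun v =>
        ExteriorAlgebra.ι (MvPolynomial (Fin n) K)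
          (∑ i : Fin m, pullbackPoly K g (v i) • pullbackVec K g i)
      map_add' := by
        intro u v
        show ExteriorAlgebra.ι (MvPolynomial (Fin n) K)
            (∑ i : Fin m, pullbackPoly K g ((u + v) i) • pullbackVec K g i) =
          ExteriorAlgebra.ι (MvPolynomial (Fin n) K)
              (∑ i : Fin m, pullbackPoly K g (u i) • pullbackVec K g i) +
            ExteriorAlgebra.ι (MvPolynomial (Fin n) K)
              (∑ i : Fin m, pullbackPoly K g (v i) • pullbackVec K g i)
        rw [← map_add, ← Finset.sum_add_distrib]
        exact congrArg _ (Finset.sum_congr rfl fun i _ => by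
          simp [Pi.add_apply, map_add, add_smul])
      map_smul' := by
        intro c v
        show ExteriorAlgebra.ι (MvPolynomial (Fin n) K)
            (∑ i : Fin m, pullbackPoly K g ((c • v) i) • pullbackVec K g i) =
          algebraMap (MvPolynomial (Fin n) K) (Omega K n)
              (pullbackPoly K g c) *
            ExteriorAlgebra.ι (MvPolynomial (Fin n) K)
              (∑ i : Fin m, pullbackPoly K g (v i) • pullbackVec K g i)
        rw [← Algebra.smul_def, ← map_smul, Finset.smul_sum]
        exact congrArg _ (Finset.sum_congr rfl fun i _ => by
          simp [Pi.smul_apply, smul_eq_mul, map_mul, smul_smul]) }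
  (ExteriorAlgebra.lift (MvPolynomial (Fin m) K)
    ⟨L, fun v => ExteriorAlgebra.ι_sq_zero _⟩ :
      Omega K m →ₐ[MvPolynomial (Fin m) K] Omega K n)

/-!
Write `topCoeff` for the coefficient of `dx₁ ∧ ⋯ ∧ dxₙ`, so that `P = topCoeff (f*ω_g)`.

If `f ≠ g`, then, both maps being strictly increasing, some vertex `g k` lies outside the image
of `f`, and `f*` kills both `x_{g k}` and `dx_{g k}`. Every summand of `ω_g` contains one of
them, so `f*ω_g = 0` and `P = 0`.

If `f = g`, then `f*ω_f = ω_id`. Since `dx₀ = -(dx₁ + ⋯ + dxₙ)`, deleting `dxᵢ` from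
`dx₀ ∧ ⋯ ∧ dxₙ` leaves `(-1)ⁱ dx₁ ∧ ⋯ ∧ dxₙ`, so `P = n! (x₀ + ⋯ + xₙ) = n!`. Slicing along
the first coordinate shows that `Tₙ` has volume `1 / n!`.
-/

theorem List.eraseIdx_ofFn {α : Type*} {n : ℕ} (a : Fin (n + 1) → α) (i : Fin (n + 1)) :
    (List.ofFn a).eraseIdx i = List.ofFn (i.removeNth a) := by
  apply List.ext_getElem
  · rw [List.length_eraseIdx_of_lt] <;> simp [Fin.is_le]
  · intro j h₁ h₂
    rw [List.getElem_eraseIdx]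
    simp only [List.getElem_ofFn, Fin.removeNth_apply]
    split <;> congr 1 <;> ext <;> simp [Fin.succAbove, Fin.lt_def, *]

namespace AlternatingMap

variable {R M N : Type*} [CommRing R] [AddCommGroup M] [Module R M] [AddCommGroup N] [Module R N]

theorem map_cons_sum_removeNth {n : ℕ} (D : M [⋀^Fin (n + 1)]→ₗ[R] N) (v : Fin (n + 1) → M)
    (j : Fin (n + 1)) : D (Fin.cons (∑ k, v k) (j.removeNth v)) = (-1) ^ (j : ℕ) • D v := by
  classical
  -- expanding the first slot linearly, every `v k` with `k ≠ j` repeats an entry of `j.removeNth v`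
  have hother : ∀ k ≠ j, D (Function.update (Fin.cons (v j) (j.removeNth v)) 0 (v k)) = 0 := by
    intro k hk
    obtain ⟨l, rfl⟩ := Fin.exists_succAbove_eq hk
    rw [Fin.update_cons_zero]
    exact D.map_eq_zero_of_eq _ (i := 0) (j := l.succ) (by simp [Fin.removeNth_apply])
      (Fin.succ_ne_zero l).symm
  rw [← Fin.update_cons_zero (v j), D.map_update_sum, Finset.sum_eq_single j
      (fun k _ hk => hother k hk) (by simp), Fin.update_cons_zero]
  change D (Matrix.vecCons _ _) = _
  rw [← D.neg_one_pow_smul_map_insertNth j, Fin.insertNth_self_removeNth]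

theorem map_comp_succAbove_of_sum_eq_zero {n : ℕ} (D : M [⋀^Fin n]→ₗ[R] N)
    {u : Fin (n + 1) → M} (hu : ∑ k, u k = 0) (i : Fin (n + 1)) :
    D (u ∘ i.succAbove) = (-1) ^ (i : ℕ) • D (u ∘ Fin.succ) := by
  cases i using Fin.cases with
  | zero => simp [Fin.succAbove_zero]
  | succ j =>
    obtain ⟨n, rfl⟩ := Nat.exists_eq_add_one_of_ne_zero j.pos.ne'
    have hu₀ : u 0 = -∑ k, (u ∘ Fin.succ) k :=
      eq_neg_of_add_eq_zero_left (by rwa [Fin.sum_univ_succ] at hu)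
    have hcons : u ∘ j.succ.succAbove = Fin.cons (u 0) (j.removeNth (u ∘ Fin.succ)) := by
      ext l
      cases l using Fin.cases <;> simp [Fin.removeNth_apply, Fin.succ_succAbove_succ]
    classical
    rw [hcons, hu₀, ← Fin.update_cons_zero (∑ k, (u ∘ Fin.succ) k), D.map_update_neg,
      Fin.update_cons_zero, map_cons_sum_removeNth, Fin.val_succ, pow_succ, mul_neg_one,
      neg_smul]

end AlternatingMap

theorem Fin.sum_fiber_succ_eq_sub {ι A : Type*} [Fintype ι] [AddCommGroup A] {m : ℕ}
    (f : ι → Fin (m + 1)) (c : ι → A) :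
    ∑ i : Fin m, ∑ k with f k = i.succ, c k = ∑ k, c k - ∑ k with f k = 0, c k := by
  rw [eq_sub_iff_add_eq', ← Fin.sum_univ_succ (f := fun j => ∑ k with f k = j, c k),
    Finset.sum_fiberwise]

theorem StrictMono.eq_of_range_subset {α β : Type*} [LinearOrder α] [Finite α] [Preorder β]
    {f g : α → β} (hf : StrictMono f) (hg : StrictMono g) (h : Set.range g ⊆ Set.range f) :
    f = g := by
  refine (hf.range_inj hg).1 (Set.eq_of_subset_of_ncard_le h ?_ (Set.finite_range f)).symm
  rw [Set.ncard_range_of_injective hf.injective, Set.ncard_range_of_injective hg.injective]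

namespace ExteriorAlgebra

variable (R : Type*) [CommRing R] (n : ℕ)

def topCoeff : ExteriorAlgebra R (Fin n → R) →ₗ[R] R :=
  liftAlternating (Pi.single n (Pi.basisFun R (Fin n)).det)

variable {R n}

theorem topCoeff_algebraMap_mul_ιMulti (c : R) (v : Fin n → Fin n → R) :
    topCoeff R n (algebraMap R _ c * ιMulti R n v) = c * (Pi.basisFun R (Fin n)).det v := by
  rw [← Algebra.smul_def, map_smul, topCoeff, liftAlternating_apply_ιMulti, Pi.single_eq_same,
    smul_eq_mul]

theorem topCoeff_algebraMap_mul_prod_ι_single (c : R) :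
    topCoeff R n (algebraMap R _ c * (List.ofFn fun i => ι R (Pi.single i (1 : R))).prod) = c := by
  have hbasis : (fun i => Pi.single i (1 : R)) = ⇑(Pi.basisFun R (Fin n)) :=
    funext fun i => (Pi.basisFun_apply R (Fin n) i).symm
  rw [← ιMulti_apply, topCoeff_algebraMap_mul_ιMulti, hbasis, Module.Basis.det_self, mul_one]

end ExteriorAlgebra

section Simplex

open MeasureTheory Set

theorem lintegral_Icc_ofReal_sub_pow_div_factorial (n : ℕ) {a : ℝ} (ha : 0 ≤ a) :
    ∫⁻ x in Icc 0 a, ENNReal.ofReal ((a - x) ^ n / n.factorial) =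
      ENNReal.ofReal (a ^ (n + 1) / (n + 1).factorial) := by
  have hnonneg : 0 ≤ᵐ[volume.restrict (Icc 0 a)] fun x => (a - x) ^ n / n.factorial :=
    ae_restrict_of_forall_mem measurableSet_Icc fun x hx =>
      div_nonneg (pow_nonneg (sub_nonneg.2 hx.2) n) (Nat.cast_nonneg _)
  rw [← ofReal_integral_eq_lintegral_ofReal (by fun_prop : Continuous _).integrableOn_Icc hnonneg,
    integral_Icc_eq_integral_Ioc, ← intervalIntegral.integral_of_le ha,
    intervalIntegral.integral_div, intervalIntegral.integral_comp_sub_left (· ^ n), integral_pow]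
  congr 1
  push_cast [Nat.factorial_succ]
  field_simp
  ring

theorem volume_setOf_nonneg_sum_le (n : ℕ) {a : ℝ} (ha : 0 ≤ a) :
    volume {t : Fin n → ℝ | (∀ i, 0 ≤ t i) ∧ ∑ i, t i ≤ a} =
      ENNReal.ofReal (a ^ n / n.factorial) := by
  induction n generalizing a with
  | zero => simp [ha, volume_pi]
  | succ n ih =>
    let T : Set (ℝ × (Fin n → ℝ)) := {p | 0 ≤ p.1 ∧ (∀ i, 0 ≤ p.2 i) ∧ p.1 + ∑ i, p.2 i ≤ a}
    have hT : MeasurableSet T := by measurability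
    have hpre : {t : Fin (n + 1) → ℝ | (∀ i, 0 ≤ t i) ∧ ∑ i, t i ≤ a} =
        MeasurableEquiv.piFinSuccAbove (fun _ => ℝ) 0 ⁻¹' T := by
      ext t
      simp [T, Fin.forall_fin_succ, Fin.sum_univ_succ, Fin.tail, and_assoc]
    have hslice : ∀ x, volume (Prod.mk x ⁻¹' T) =
        (Icc 0 a).indicator (fun x => ENNReal.ofReal ((a - x) ^ n / n.factorial)) x := by
      intro x
      by_cases hx : x ∈ Icc 0 a
      · rw [indicator_of_mem hx, ← ih (sub_nonneg.2 hx.2)]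
        congr 1
        ext t
        simp only [T, mem_preimage, mem_ofPred_eq, hx.1, true_and, le_sub_iff_add_le']
      · have hempty : Prod.mk x ⁻¹' T = ∅ :=
          eq_empty_of_forall_notMem fun t ⟨hx₀, ht, _⟩ => hx ⟨hx₀, by
            linarith [Finset.sum_nonneg fun i (_ : i ∈ Finset.univ) => ht i]⟩
        rw [indicator_of_notMem hx, hempty, measure_empty]
    rw [hpre, ((volume_preserving_piFinSuccAbove (fun _ => ℝ) 0).measure_preimage
        hT.nullMeasurableSet), Measure.volume_eq_prod, Measure.prod_apply hT,
      lintegral_congr hslice, lintegral_indicator measurableSet_Icc,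
      lintegral_Icc_ofReal_sub_pow_div_factorial n ha]

end Simplex

section Whitney

variable (K : Type) [Field K] {n m : ℕ}

theorem sum_xC : ∑ j, xC K n j = 1 := by
  simp [xC, Fin.sum_univ_succ]

theorem sum_vDX : ∑ j, vDX K n j = 0 := by
  simp [vDX, Fin.sum_univ_succ]

def pullbackRingHom (f : Fin (n + 1) → Fin (m + 1)) : Omega K m →+* Omega K n where
  toFun := pullback K f
  map_one' := by unfold pullback; exact map_one _
  map_mul' := by unfold pullback; exact map_mul _
  map_zero' := by unfold pullback; exact map_zero _
  map_add' := by unfold pullback; exact map_add _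

@[simp]
theorem coe_pullbackRingHom (f : Fin (n + 1) → Fin (m + 1)) :
    ⇑(pullbackRingHom K f) = pullback K f := rfl

theorem pullback_ι (f : Fin (n + 1) → Fin (m + 1)) (v : Fin m → MvPolynomial (Fin m) K) :
    pullback K f (ExteriorAlgebra.ι _ v) =
      ExteriorAlgebra.ι _ (∑ i, pullbackPoly K f (v i) • pullbackVec K f i) := by
  unfold pullback
  rw [ExteriorAlgebra.lift_ι_apply]
  rfl

theorem pullback_algebraMap (f : Fin (n + 1) → Fin (m + 1)) (c : MvPolynomial (Fin m) K) :
    pullback K f (algebraMap (MvPolynomial (Fin m) K) (Omega K m) c) =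
      algebraMap (MvPolynomial (Fin n) K) (Omega K n) (pullbackPoly K f c) := by
  -- the algebra structure over which `pullback` is defined as `ExteriorAlgebra.lift`
  let : Algebra (MvPolynomial (Fin m) K) (Omega K n) :=
    ((algebraMap _ _).comp (pullbackPoly K f).toRingHom).toAlgebra' fun c x =>
      Algebra.commutes (pullbackPoly K f c) x
  exact AlgHom.commutes (ExteriorAlgebra.lift _ _) c

theorem pullback_smul (f : Fin (n + 1) → Fin (m + 1)) (c : MvPolynomial (Fin m) K)
    (x : Omega K m) : pullback K f (c • x) = pullbackPoly K f c • pullback K f x := by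
  rw [Algebra.smul_def, Algebra.smul_def, ← coe_pullbackRingHom, map_mul, coe_pullbackRingHom,
    pullback_algebraMap]

theorem pullbackPoly_xC (f : Fin (n + 1) → Fin (m + 1)) (j : Fin (m + 1)) :
    pullbackPoly K f (xC K m j) = ∑ i with f i = j, xC K n i := by
  cases j using Fin.cases with
  | zero =>
    change pullbackPoly K f (1 - ∑ i, MvPolynomial.X i) = _
    simp only [map_sub, map_one, map_sum, pullbackPoly, MvPolynomial.aeval_X]
    rw [Fin.sum_fiber_succ_eq_sub, sum_xC, sub_sub_cancel]
  | succ i => simp [pullbackPoly, xC]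

theorem pullback_dX (f : Fin (n + 1) → Fin (m + 1)) (j : Fin (m + 1)) :
    pullback K f (dX K m j) = ExteriorAlgebra.ι _ (∑ i with f i = j, vDX K n i) := by
  unfold dX
  rw [pullback_ι]
  congr 1
  cases j using Fin.cases with
  | zero =>
    have hdx₀ : ∀ i, vDX K m 0 i = -1 := fun i => by simp [vDX, Finset.sum_apply, Pi.single_apply]
    simp only [hdx₀, map_neg, map_one, neg_smul, one_smul, Finset.sum_neg_distrib, pullbackVec]
    rw [Fin.sum_fiber_succ_eq_sub, sum_vDX, zero_sub, neg_neg]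
  | succ i₀ =>
    simp [vDX, Pi.single_apply, pullbackVec]

theorem pullbackPoly_xC_apply_of_injective {f : Fin (n + 1) → Fin (m + 1)}
    (hf : Function.Injective f) (j : Fin (n + 1)) : pullbackPoly K f (xC K m (f j)) = xC K n j := by
  simp [pullbackPoly_xC, hf.eq_iff, Finset.filter_eq']

theorem pullback_dX_apply_of_injective {f : Fin (n + 1) → Fin (m + 1)}
    (hf : Function.Injective f) (j : Fin (n + 1)) : pullback K f (dX K m (f j)) = dX K n j := by
  rw [pullback_dX]
  simp [hf.eq_iff, Finset.filter_eq', dX]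

theorem pullbackPoly_xC_of_notMem_range {f : Fin (n + 1) → Fin (m + 1)} {j : Fin (m + 1)}
    (hj : j ∉ Set.range f) : pullbackPoly K f (xC K m j) = 0 := by
  have : ∀ i, f i ≠ j := fun i h => hj ⟨i, h⟩
  simp [pullbackPoly_xC, this]

theorem pullback_dX_of_notMem_range {f : Fin (n + 1) → Fin (m + 1)} {j : Fin (m + 1)}
    (hj : j ∉ Set.range f) : pullback K f (dX K m j) = 0 := by
  have : ∀ i, f i ≠ j := fun i h => hj ⟨i, h⟩
  simp [pullback_dX, this]

theorem pullback_omegaF_self {f : Fin (n + 1) → Fin (m + 1)} (hf : Function.Injective f) :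
    pullback K f (omegaF K f) = omegaF K (id : Fin (n + 1) → Fin (n + 1)) := by
  rw [omegaF, omegaF, pullback_smul, map_natCast, ← coe_pullbackRingHom, map_sum]
  refine congrArg _ (Finset.sum_congr rfl fun i _ => ?_)
  rw [coe_pullbackRingHom, pullback_smul, ← coe_pullbackRingHom, map_mul, map_list_prod,
    ← List.eraseIdx_map, List.map_ofFn, coe_pullbackRingHom, pullback_algebraMap,
    pullbackPoly_xC_apply_of_injective K hf, map_pow, map_neg, map_one]
  congr 4
  exact congrArg List.ofFn (funext (pullback_dX_apply_of_injective K hf))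

theorem pullback_omegaF_eq_zero {f g : Fin (n + 1) → Fin (m + 1)} {k : Fin (n + 1)}
    (hk : g k ∉ Set.range f) : pullback K f (omegaF K g) = 0 := by
  rw [omegaF, pullback_smul, ← coe_pullbackRingHom, map_sum, Finset.sum_eq_zero, smul_zero]
  intro i _
  rw [coe_pullbackRingHom, pullback_smul, ← coe_pullbackRingHom, map_mul, map_list_prod,
    coe_pullbackRingHom, pullback_algebraMap]
  obtain rfl | hik := eq_or_ne i k
  · rw [pullbackPoly_xC_of_notMem_range K hk, map_zero, zero_mul, smul_zero]
  · obtain ⟨l, rfl⟩ := Fin.exists_succAbove_eq hik.symm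
    rw [List.prod_eq_zero, mul_zero, smul_zero]
    rw [List.eraseIdx_ofFn, List.map_ofFn]
    exact List.mem_ofFn.2 ⟨l, pullback_dX_of_notMem_range K hk⟩

theorem det_vDX_comp_succAbove (i : Fin (n + 1)) :
    (Pi.basisFun _ (Fin n)).det (vDX K n ∘ i.succAbove) = (-1) ^ (i : ℕ) := by
  have hsucc : vDX K n ∘ Fin.succ = ⇑(Pi.basisFun _ (Fin n)) := by
    funext j
    simp [vDX]
  rw [AlternatingMap.map_comp_succAbove_of_sum_eq_zero _ (sum_vDX K) i, hsucc,
    Module.Basis.det_self]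
  simp

theorem topCoeff_omegaF_id :
    ExteriorAlgebra.topCoeff _ n (omegaF K (id : Fin (n + 1) → Fin (n + 1))) = n.factorial := by
  have hterm : ∀ i : Fin (n + 1), ExteriorAlgebra.topCoeff _ n
      ((-1 : MvPolynomial (Fin n) K) ^ (i : ℕ) • (algebraMap _ (Omega K n) (xC K n (id i)) *
        ((List.ofFn fun j => dX K n (id j)).eraseIdx i).prod)) = xC K n i := by
    intro i
    have hprod : (List.ofFn (i.removeNth fun j => dX K n (id j))).prod =
        ExteriorAlgebra.ιMulti _ n (vDX K n ∘ i.succAbove) :=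
      (ExteriorAlgebra.ιMulti_apply _).symm
    rw [List.eraseIdx_ofFn, hprod, map_smul, ExteriorAlgebra.topCoeff_algebraMap_mul_ιMulti,
      det_vDX_comp_succAbove, smul_eq_mul, mul_left_comm, ← pow_add, Even.neg_one_pow ⟨i, rfl⟩,
      mul_one]
    rfl
  rw [omegaF, map_smul, map_sum, Finset.sum_congr rfl fun i _ => hterm i, sum_xC, smul_eq_mul,
    mul_one]

theorem topCoeff_algebraMap_mul_prod_dX_succ (P : MvPolynomial (Fin n) K) :
    ExteriorAlgebra.topCoeff _ n (algebraMap _ (Omega K n) P *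
      (List.ofFn fun i : Fin n => dX K n i.succ).prod) = P :=
  ExteriorAlgebra.topCoeff_algebraMap_mul_prod_ι_single P

end Whitney

open MeasureTheory in
set_option synthInstance.maxHeartbeats 1000000 in
/-- Work over `K = ℝ`. Let `f, g : [n] → [m]` be strictly increasing maps and
write the pullback `f*ω_g` (which lies in the degree-`n` component of `Ω_n`, a
free module of rank one with basis `dx₁ ∧ ⋯ ∧ dxₙ`) as `P ⬝ dx₁ ∧ ⋯ ∧ dxₙ`
with `P ∈ R = MvPolynomial (Fin n) ℝ`. Then the Lebesgue integral of the
polynomial function of `P` over the solid standard simplex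
`Tₙ = {t : ℝⁿ | tᵢ ≥ 0, Σ tᵢ ≤ 1}` equals `1` if `f = g` and `0` if `f ≠ g`:
the orthonormality relation `∫_{Δⁿ} f*ω_g = δ_{f,g}`. -/
theorem stmt12 (n m : ℕ) (f g : Fin (n + 1) → Fin (m + 1))
    (hf : StrictMono f) (hg : StrictMono g)
    (P : MvPolynomial (Fin n) ℝ)
    (hP : pullback ℝ f (omegaF ℝ g) =
      algebraMap (MvPolynomial (Fin n) ℝ) (Omega ℝ n) P *
        (List.ofFn fun i : Fin n => dX ℝ n i.succ).prod) :
    (∫ t in {t : Fin n → ℝ | (∀ i, 0 ≤ t i) ∧ ∑ i, t i ≤ 1},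
        MvPolynomial.eval t P) = if f = g then 1 else 0 := by
  have hP' : P = ExteriorAlgebra.topCoeff _ n (pullback ℝ f (omegaF ℝ g)) := by
    rw [hP, topCoeff_algebraMap_mul_prod_dX_succ]
  split_ifs with hfg
  · subst hfg
    rw [pullback_omegaF_self ℝ hf.injective, topCoeff_omegaF_id] at hP'
    simp only [hP', map_natCast]
    rw [setIntegral_const, measureReal_def,
      volume_setOf_nonneg_sum_le n zero_le_one, ENNReal.toReal_ofReal (by positivity), one_pow,
      smul_eq_mul, one_div_mul_cancel (by positivity)]
  · obtain ⟨_, ⟨k, rfl⟩, hk⟩ := Set.not_subset.1 (mt (hf.eq_of_range_subset hg) hfg)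
    rw [pullback_omegaF_eq_zero ℝ hk, map_zero] at hP'
    simp [hP']

end
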